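/- arXiv:1910.02865 — 2 statements merged into one kernel-verified Lean document; each statement's English description precedes it below -/
import Mathlib

section
/- Let κ > 0 and u ∈ S^{d-1}. Then ∫_{S^{d-1}} M_u(ω)(ω·u)² dσ(ω) > 1/d. Consequently the leading eigenvalue λ∥ = ∫ M_u (ω·u)² dσ − 1/d of the Q-tensor Q_{M_u} = ∫ M_u (ω⊗ω − Id/d) dσ is strictly positive, so it is strictly larger than the other eigenvalue −λ∥/(d−1), and u spans the leading eigendirection of Q_{M_u}. -/
/-!
Write `t(ω) = ⟪ω, u⟫²`. Rotation invariance of `σ` makes the law of `⟪ω, v⟫` the same for every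
unit vector `v`; summing over an orthonormal basis gives `∫ t dσ = 1/d`, and evaluating at
`e₀`, `e₁` and `(3e₀ + 4e₁)/5` shows that `t` is not a.e. constant when `d ≥ 2`. Since
`exp (κ/2 · x)` is strictly increasing, the strict Chebyshev (association) inequality gives
`Z ∫ t dσ < ∫ exp (κ/2 · t) t dσ`, which after dividing by `Z` is `1/d < ∫ M t dσ`.
-/

open MeasureTheory Metric
open scoped RealInnerProductSpace

/-- The map induced on the unit sphere by a linear isometry of `EuclideanSpace ℝ (Fin d)`. -/
noncomputable def sphereRot {d : ℕ}
    (e : EuclideanSpace ℝ (Fin d) ≃ₗᵢ[ℝ] EuclideanSpace ℝ (Fin d))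
    (ω : sphere (0 : EuclideanSpace ℝ (Fin d)) 1) :
    sphere (0 : EuclideanSpace ℝ (Fin d)) 1 :=
  ⟨e ω, by
    have hω := ω.2
    simp only [mem_sphere_iff_norm, sub_zero] at hω ⊢
    rw [e.norm_map]
    exact hω⟩

lemma Continuous.integrable_of_compactSpace {X : Type*} [TopologicalSpace X] [CompactSpace X]
    [MeasurableSpace X] [OpensMeasurableSpace X] {μ : Measure X} [IsFiniteMeasure μ]
    {f : X → ℝ} (hf : Continuous f) : Integrable f μ :=
  hf.integrable_of_hasCompactSupport (HasCompactSupport.of_compactSpace f)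

theorem integral_comp_mul_integral_lt_of_strictMono {α : Type*} [MeasurableSpace α]
    {μ : Measure α} [IsProbabilityMeasure μ] {f : α → ℝ} {φ : ℝ → ℝ} (hφ : StrictMono φ)
    (hf : Integrable f μ) (hφf : Integrable (fun x => φ (f x)) μ)
    (hφff : Integrable (fun x => φ (f x) * f x) μ)
    (hnc : ¬ ∀ᵐ x ∂μ, f x = ∫ y, f y ∂μ) :
    (∫ x, φ (f x) ∂μ) * (∫ x, f x ∂μ) < ∫ x, φ (f x) * f x ∂μ := by
  set m := ∫ y, f y ∂μ
  set h := fun x => (φ (f x) - φ m) * (f x - m)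
  have h_nonneg : 0 ≤ h := fun x => by
    rcases le_total (f x) m with hx | hx
    · exact mul_nonneg_of_nonpos_of_nonpos (sub_nonpos.2 (hφ.monotone hx)) (sub_nonpos.2 hx)
    · exact mul_nonneg (sub_nonneg.2 (hφ.monotone hx)) (sub_nonneg.2 hx)
  have h_expand : h = fun x => (φ (f x) * f x - m * φ (f x)) - (φ m * f x - φ m * m) := by
    ext x; ring
  have h_int : Integrable h μ := by
    rw [h_expand]
    exact (hφff.sub' (hφf.const_mul m)).sub' ((hf.const_mul _).sub' (integrable_const _))
  have h_integral : ∫ x, h x ∂μ = ∫ x, φ (f x) * f x ∂μ - m * ∫ x, φ (f x) ∂μ := by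
    simp only [h_expand]
    rw [integral_sub (hφff.sub' (hφf.const_mul m)) ((hf.const_mul _).sub' (integrable_const _)),
      integral_sub hφff (hφf.const_mul m), integral_sub (hf.const_mul _) (integrable_const _),
      integral_const_mul, integral_const_mul]
    simp [m]
  have h_pos : 0 < ∫ x, h x ∂μ := by
    refine (integral_nonneg h_nonneg).lt_of_ne' fun h_zero => hnc ?_
    filter_upwards [(integral_eq_zero_iff_of_nonneg h_nonneg h_int).1 h_zero] with x hx
    rcases mul_eq_zero.1 hx with hφx | hfx
    · exact hφ.injective (sub_eq_zero.1 hφx)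
    · exact sub_eq_zero.1 hfx
  linarith

section RotationInvariant

variable {d : ℕ} {σ : Measure (sphere (0 : EuclideanSpace ℝ (Fin d)) 1)}

local notation "ℝᵈ" => EuclideanSpace ℝ (Fin d)
local notation "𝕊ᵈ⁻¹" => sphere (0 : ℝᵈ) 1

lemma continuous_sphereRot (e : ℝᵈ ≃ₗᵢ[ℝ] ℝᵈ) : Continuous (sphereRot e) :=
  (e.continuous.comp continuous_subtype_val).subtype_mk _

lemma continuous_inner_sphere (v : ℝᵈ) : Continuous fun ω : 𝕊ᵈ⁻¹ => ⟪(ω : ℝᵈ), v⟫ :=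
  continuous_subtype_val.inner continuous_const

lemma map_inner_eq_of_norm_eq (hσ : ∀ e : ℝᵈ ≃ₗᵢ[ℝ] ℝᵈ, σ.map (sphereRot e) = σ)
    {v w : ℝᵈ} (hvw : ‖v‖ = ‖w‖) :
    σ.map (fun ω : 𝕊ᵈ⁻¹ => ⟪(ω : ℝᵈ), v⟫) = σ.map (fun ω : 𝕊ᵈ⁻¹ => ⟪(ω : ℝᵈ), w⟫) := by
  set e := Submodule.reflection (ℝ ∙ (v - w))ᗮ
  have hcomp : (fun ω : 𝕊ᵈ⁻¹ => ⟪(ω : ℝᵈ), w⟫) ∘ sphereRot e = fun ω : 𝕊ᵈ⁻¹ => ⟪(ω : ℝᵈ), v⟫ := by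
    funext ω
    change ⟪e ω, w⟫ = ⟪(ω : ℝᵈ), v⟫
    rw [← Submodule.reflection_sub hvw, LinearIsometryEquiv.inner_map_map]
  rw [← hcomp, ← Measure.map_map (continuous_inner_sphere w).measurable
    (continuous_sphereRot e).measurable, hσ]

lemma integral_comp_inner_eq_of_norm_eq
    (hσ : ∀ e : ℝᵈ ≃ₗᵢ[ℝ] ℝᵈ, σ.map (sphereRot e) = σ)
    {v w : ℝᵈ} (hvw : ‖v‖ = ‖w‖) {g : ℝ → ℝ} (hg : Measurable g) :
    ∫ ω, g ⟪(ω : ℝᵈ), v⟫ ∂σ = ∫ ω, g ⟪(ω : ℝᵈ), w⟫ ∂σ := by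
  rw [← integral_map (continuous_inner_sphere v).aemeasurable hg.aestronglyMeasurable,
    ← integral_map (continuous_inner_sphere w).aemeasurable hg.aestronglyMeasurable,
    map_inner_eq_of_norm_eq hσ hvw]

lemma ae_comp_inner_iff_of_norm_eq
    (hσ : ∀ e : ℝᵈ ≃ₗᵢ[ℝ] ℝᵈ, σ.map (sphereRot e) = σ)
    {v w : ℝᵈ} (hvw : ‖v‖ = ‖w‖) {p : ℝ → Prop} (hp : MeasurableSet {x | p x}) :
    (∀ᵐ ω : 𝕊ᵈ⁻¹ ∂σ, p ⟪(ω : ℝᵈ), v⟫) ↔ ∀ᵐ ω : 𝕊ᵈ⁻¹ ∂σ, p ⟪(ω : ℝᵈ), w⟫ := by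
  rw [← ae_map_iff (continuous_inner_sphere v).aemeasurable hp,
    ← ae_map_iff (continuous_inner_sphere w).aemeasurable hp, map_inner_eq_of_norm_eq hσ hvw]

lemma integral_inner_sq_eq_one_div [IsProbabilityMeasure σ]
    (hσ : ∀ e : ℝᵈ ≃ₗᵢ[ℝ] ℝᵈ, σ.map (sphereRot e) = σ) {u : ℝᵈ} (hu : ‖u‖ = 1) :
    ∫ ω, ⟪(ω : ℝᵈ), u⟫ ^ 2 ∂σ = 1 / d := by
  set b := EuclideanSpace.basisFun (Fin d) ℝ
  have h_coord : ∀ i, ∫ ω, ⟪(ω : ℝᵈ), b i⟫ ^ 2 ∂σ = ∫ ω, ⟪(ω : ℝᵈ), u⟫ ^ 2 ∂σ := fun i =>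
    integral_comp_inner_eq_of_norm_eq hσ (by rw [b.orthonormal.1 i, hu]) (measurable_id.pow_const 2)
  have h_sum : ∑ i, ∫ ω, ⟪(ω : ℝᵈ), b i⟫ ^ 2 ∂σ = 1 := by
    rw [← integral_finsetSum _ fun i _ =>
      Continuous.integrable_of_compactSpace (by fun_prop)]
    simp [b.sum_sq_inner_left]
  refine eq_one_div_of_mul_eq_one_right ?_
  simpa [h_coord] using h_sum

lemma not_ae_inner_sq_eq [NeZero σ] (hd : 2 ≤ d)
    (hσ : ∀ e : ℝᵈ ≃ₗᵢ[ℝ] ℝᵈ, σ.map (sphereRot e) = σ) {u : ℝᵈ} (hu : ‖u‖ = 1)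
    {c : ℝ} (hc : c ≠ 0) :
    ¬ ∀ᵐ ω : 𝕊ᵈ⁻¹ ∂σ, ⟪(ω : ℝᵈ), u⟫ ^ 2 = c := by
  intro h
  have h_unit : ∀ v : ℝᵈ, ‖v‖ = 1 → ∀ᵐ ω : 𝕊ᵈ⁻¹ ∂σ, ⟪(ω : ℝᵈ), v⟫ ^ 2 = c := fun v hv =>
    (ae_comp_inner_iff_of_norm_eq hσ (hu.trans hv.symm) (p := fun x => x ^ 2 = c)
      (measurableSet_eq_fun (measurable_id.pow_const 2) measurable_const)).1 h
  set b := EuclideanSpace.basisFun (Fin d) ℝ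
  set v₀ := b ⟨0, by omega⟩
  set v₁ := b ⟨1, by omega⟩
  have h_orth : ⟪v₀, v₁⟫ = 0 := b.orthonormal.2 (by simp [Fin.ext_iff])
  have h_norm : ‖(3 / 5 : ℝ) • v₀ + (4 / 5 : ℝ) • v₁‖ = 1 := by
    refine (pow_eq_one_iff_of_nonneg (norm_nonneg _) two_ne_zero).1 ?_
    rw [norm_add_sq_real, norm_smul, norm_smul, real_inner_smul_left, real_inner_smul_right,
      h_orth, b.orthonormal.1, b.orthonormal.1]
    norm_num
  obtain ⟨ω, ha, hb, hab⟩ :=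
    ((h_unit v₀ (b.orthonormal.1 _)).and ((h_unit v₁ (b.orthonormal.1 _)).and
      (h_unit _ h_norm))).exists
  rw [inner_add_right, real_inner_smul_right, real_inner_smul_right] at hab
  have h_mul : ⟪(ω : ℝᵈ), v₀⟫ * ⟪(ω : ℝᵈ), v₁⟫ = 0 := by nlinarith
  refine hc (pow_eq_zero_iff two_ne_zero |>.1 ?_)
  calc c ^ 2 = (⟪(ω : ℝᵈ), v₀⟫ * ⟪(ω : ℝᵈ), v₁⟫) ^ 2 := by rw [mul_pow, ha, hb, sq]
    _ = 0 := by rw [h_mul, zero_pow two_ne_zero]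

end RotationInvariant

/-- `∫ M_u (ω·u)² dσ > 1/d`; consequently the eigenvalue
`λ∥ = ∫ M_u (ω·u)² dσ − 1/d` of the Q-tensor is strictly positive and strictly larger than
the other eigenvalue `−λ∥/(d−1)`. -/
theorem stmt5 (d : ℕ) (hd : 2 ≤ d)
    (σ : Measure (sphere (0 : EuclideanSpace ℝ (Fin d)) 1))
    [IsProbabilityMeasure σ]
    (hσ : ∀ e : EuclideanSpace ℝ (Fin d) ≃ₗᵢ[ℝ] EuclideanSpace ℝ (Fin d),
      σ.map (sphereRot e) = σ)
    (κ : ℝ) (hκ : 0 < κ)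
    (u : sphere (0 : EuclideanSpace ℝ (Fin d)) 1)
    (Z : ℝ)
    (hZ : Z = ∫ ω, Real.exp (κ / 2 *
        ⟪(ω : EuclideanSpace ℝ (Fin d)), (u : EuclideanSpace ℝ (Fin d))⟫ ^ 2) ∂σ)
    (M : sphere (0 : EuclideanSpace ℝ (Fin d)) 1 → ℝ)
    (hM : ∀ ω, M ω = Real.exp (κ / 2 *
        ⟪(ω : EuclideanSpace ℝ (Fin d)), (u : EuclideanSpace ℝ (Fin d))⟫ ^ 2) / Z)
    (lampar : ℝ)
    (hlam : lampar = (∫ ω, M ω *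
        ⟪(ω : EuclideanSpace ℝ (Fin d)), (u : EuclideanSpace ℝ (Fin d))⟫ ^ 2 ∂σ) - 1 / (d : ℝ)) :
    (1 / (d : ℝ) < ∫ ω, M ω *
        ⟪(ω : EuclideanSpace ℝ (Fin d)), (u : EuclideanSpace ℝ (Fin d))⟫ ^ 2 ∂σ) ∧
    0 < lampar ∧ -(lampar / ((d : ℝ) - 1)) < lampar := by
  have hu : ‖(u : EuclideanSpace ℝ (Fin d))‖ = 1 := norm_eq_of_mem_sphere u
  have ht : Continuous fun ω : sphere (0 : EuclideanSpace ℝ (Fin d)) 1 =>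
      ⟪(ω : EuclideanSpace ℝ (Fin d)), (u : EuclideanSpace ℝ (Fin d))⟫ ^ 2 :=
    (continuous_inner_sphere _).pow 2
  have h_moment := integral_inner_sq_eq_one_div hσ hu
  have h_mono : StrictMono fun x => Real.exp (κ / 2 * x) :=
    Real.exp_strictMono.comp (strictMono_mul_left_of_pos (half_pos hκ))
  have h_cheb := integral_comp_mul_integral_lt_of_strictMono h_mono
    ht.integrable_of_compactSpace (by fun_prop : Continuous _).integrable_of_compactSpace
    (by fun_prop : Continuous _).integrable_of_compactSpace
    (by rw [h_moment]; exact not_ae_inner_sq_eq hd hσ hu (by positivity))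
  rw [h_moment, ← hZ] at h_cheb
  have hZ_pos : 0 < Z :=
    hZ ▸ integral_exp_pos (by fun_prop : Continuous _).integrable_of_compactSpace
  have h_main : 1 / (d : ℝ) < ∫ ω, M ω *
      ⟪(ω : EuclideanSpace ℝ (Fin d)), (u : EuclideanSpace ℝ (Fin d))⟫ ^ 2 ∂σ := by
    simp only [hM, div_mul_eq_mul_div _ Z]
    rw [integral_div, lt_div_iff₀ hZ_pos]
    linarith
  have h_lam : 0 < lampar := hlam ▸ sub_pos.2 h_main
  have h_dim : (0 : ℝ) < d - 1 := by
    have : (2 : ℝ) ≤ d := by exact_mod_cast hd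
    linarith
  exact ⟨h_main, h_lam, by linarith [div_pos h_lam h_dim]⟩
end

section
/- Let κ > 0, let Z > 0 be a constant, let ρ : ℝ^d → (0,∞) be differentiable, let u : ℝ^d → ℝ^d be differentiable with |u(x)| = 1 for all x, and fix ω ∈ S^{d-1}. Define F(x) = ρ(x) Z⁻¹ exp((κ/2)(ω·u(x))²). Then at every point x, writing ω⊥ = ω − (ω·u(x)) u(x), (u·∇)u = Σ_i u_i ∂_{x_i}u, and (ω⊥·∇)u = Σ_i (ω⊥)_i ∂_{x_i}u, one has the identity ω·∇_x F(x) = F(x) [ (ω·u)(u·∇_x log ρ) + ω⊥·∇_x log ρ + κ (ω·u)² ω⊥·((u·∇)u) + κ (ω·u) ω⊥·((ω⊥·∇)u) ], where ∇_x log ρ = ∇_x ρ / ρ and all functions are evaluated at x. In particular ω·∇_x(ρ M_u) decomposes as ρ M_u (S_{e,o} + S_{o,e}), where S_{e,o} = ω⊥·∇log ρ + κ(ω·u)² ω⊥·((u·∇)u) is even in (ω·u) and odd in ω⊥, and S_{o,e} = (ω·u)(u·∇log ρ) + κ(ω·u) ω⊥·((ω⊥·∇)u) is odd in (ω·u) and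 even in ω⊥. -/
/-!
Write `F = ρ · (M ∘ u)`. Differentiating `M_e(ω) = Z⁻¹ exp((κ/2)(ω·e)²)` in `e` gives
`ω·∇F = F (ω·∇ log ρ + κ (ω·u) ω·((ω·∇)u))`. The constraint `|u| = 1` forces `u ⊥ ∂_v u` for
every direction `v`, so in `ω·((ω·∇)u)` the outer `ω` may be replaced by `ω⊥`; splitting the
inner direction as `ω = ω⊥ + (ω·u) u` then produces the four terms.
-/

open scoped RealInnerProductSpace

variable {E G : Type*} [NormedAddCommGroup E] [InnerProductSpace ℝ E]
  [NormedAddCommGroup G] [NormedSpace ℝ G]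

noncomputable def nematicDensity (κ Z : ℝ) (ω e : E) : ℝ :=
  Z⁻¹ * Real.exp (κ / 2 * ⟪ω, e⟫ ^ 2)

theorem hasFDerivAt_nematicDensity (κ Z : ℝ) (ω e : E) :
    HasFDerivAt (nematicDensity κ Z ω)
      ((nematicDensity κ Z ω e * (κ * ⟪ω, e⟫)) • innerSL ℝ ω) e := by
  refine ((((innerSL ℝ ω).hasFDerivAt.pow 2).const_mul (κ / 2)).exp.const_mul Z⁻¹).congr_fderiv ?_
  ext v
  simp only [nematicDensity, smul_apply, innerSL_apply_apply, smul_eq_mul]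
  ring

theorem inner_fderiv_eq_zero_of_norm_eq {u : G → E} {c : ℝ} {x : G}
    (hu : DifferentiableAt ℝ u x) (hc : ∀ y, ‖u y‖ = c) (v : G) :
    ⟪u x, fderiv ℝ u x v⟫ = 0 := by
  have h := hu.hasFDerivAt.norm_sq
  simp only [hc] at h
  simpa using congrArg (· v) (h.unique (hasFDerivAt_const _ x))

theorem fderiv_mul_nematicDensity_comp_apply (κ Z : ℝ) (ω : E) {ρ : G → ℝ} {u : G → E} {x : G}
    (hρ : DifferentiableAt ℝ ρ x) (hu : DifferentiableAt ℝ u x) (v : G) :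
    fderiv ℝ (fun y => ρ y * nematicDensity κ Z ω (u y)) x v =
      (fderiv ℝ ρ x v + ρ x * (κ * ⟪ω, u x⟫ * ⟪ω, fderiv ℝ u x v⟫)) *
        nematicDensity κ Z ω (u x) := by
  have h : HasFDerivAt (fun y => ρ y * nematicDensity κ Z ω (u y)) _ x :=
    hρ.hasFDerivAt.mul ((hasFDerivAt_nematicDensity κ Z ω (u x)).comp x hu.hasFDerivAt)
  rw [h.fderiv]
  simp only [add_apply, smul_apply, ContinuousLinearMap.comp_apply, innerSL_apply_apply,
    smul_eq_mul]
  ring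

theorem stmt19_general (d : ℕ)
    (κ : ℝ) (Z : ℝ)
    (ρ : EuclideanSpace ℝ (Fin d) → ℝ)
    (hρdiff : Differentiable ℝ ρ) (hρpos : ∀ x, 0 < ρ x)
    (u : EuclideanSpace ℝ (Fin d) → EuclideanSpace ℝ (Fin d))
    (hudiff : Differentiable ℝ u) (hunorm : ∀ x, ‖u x‖ = 1)
    (ω : EuclideanSpace ℝ (Fin d))
    (F : EuclideanSpace ℝ (Fin d) → ℝ)
    (hF : ∀ x, F x = ρ x * (Z⁻¹ * Real.exp (κ / 2 * ⟪ω, u x⟫ ^ 2)))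
    (x : EuclideanSpace ℝ (Fin d))
    (ωperp : EuclideanSpace ℝ (Fin d))
    (hωperp : ωperp = ω - ⟪ω, u x⟫ • u x) :
    fderiv ℝ F x ω
      = F x * (⟪ω, u x⟫ * (fderiv ℝ ρ x (u x) / ρ x)
          + fderiv ℝ ρ x ωperp / ρ x
          + κ * ⟪ω, u x⟫ ^ 2 * ⟪ωperp, fderiv ℝ u x (u x)⟫
          + κ * ⟪ω, u x⟫ * ⟪ωperp, fderiv ℝ u x ωperp⟫) := by
  have hFeq : F = fun y => ρ y * nematicDensity κ Z ω (u y) := funext hF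
  have horth := inner_fderiv_eq_zero_of_norm_eq (hudiff x) hunorm
  subst hωperp
  rw [hFeq, fderiv_mul_nematicDensity_comp_apply κ Z ω (hρdiff x) (hudiff x)]
  simp only [map_sub, map_smul, smul_eq_mul, inner_sub_left, inner_sub_right,
    real_inner_smul_left, real_inner_smul_right, horth]
  have hρx := (hρpos x).ne'
  field_simp
  ring

/-- the chain-rule identity for the transport term applied to the local
equilibrium `F = ρ M_u`, `M_{u(x)}(ω) = Z⁻¹ exp((κ/2)(ω·u(x))²)`:
`ω·∇ₓF = F [ (ω·u)(u·∇ log ρ) + ω⊥·∇ log ρ + κ(ω·u)² ω⊥·((u·∇)u)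
  + κ(ω·u) ω⊥·((ω⊥·∇)u) ]`,
where `ω⊥ = ω − (ω·u(x))u(x)`, directional derivatives are `fderiv`s, and
`∇ log ρ = ∇ρ/ρ`. -/
theorem stmt19 (d : ℕ) (hd : 2 ≤ d)
    (κ : ℝ) (hκ : 0 < κ) (Z : ℝ) (hZ : 0 < Z)
    (ρ : EuclideanSpace ℝ (Fin d) → ℝ)
    (hρdiff : Differentiable ℝ ρ) (hρpos : ∀ x, 0 < ρ x)
    (u : EuclideanSpace ℝ (Fin d) → EuclideanSpace ℝ (Fin d))
    (hudiff : Differentiable ℝ u) (hunorm : ∀ x, ‖u x‖ = 1)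
    (ω : EuclideanSpace ℝ (Fin d)) (hω : ‖ω‖ = 1)
    (F : EuclideanSpace ℝ (Fin d) → ℝ)
    (hF : ∀ x, F x = ρ x * (Z⁻¹ * Real.exp (κ / 2 * ⟪ω, u x⟫ ^ 2)))
    (x : EuclideanSpace ℝ (Fin d))
    (ωperp : EuclideanSpace ℝ (Fin d))
    (hωperp : ωperp = ω - ⟪ω, u x⟫ • u x) :
    fderiv ℝ F x ω
      = F x * (⟪ω, u x⟫ * (fderiv ℝ ρ x (u x) / ρ x)
          + fderiv ℝ ρ x ωperp / ρ x
          + κ * ⟪ω, u x⟫ ^ 2 * ⟪ωperp, fderiv ℝ u x (u x)⟫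
          + κ * ⟪ω, u x⟫ * ⟪ωperp, fderiv ℝ u x ωperp⟫) :=
  stmt19_general d κ Z ρ hρdiff hρpos u hudiff hunorm ω F hF x ωperp hωperp
end
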